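/- arXiv:1605.08794 — 2 statements merged into one kernel-verified Lean document; each statement's English description precedes it below -/
import Mathlib

section
/- Let F : P(X) → [0,∞] be a linear functional of the form F(μ) = ∫ f dμ for a lower semicontinuous function f : X → [0,∞] on a compact metric space X. Then the set of finite convex combinations of Dirac masses is F-dense in P(X): for every μ ∈ P(X) there exist μ_n, each a finite convex combination of Dirac masses, with μ_n → μ weakly and limsup_n F(μ_n) ≤ F(μ). -/
open Filter MeasureTheory BoundedContinuousFunction Set Function
open scoped ENNReal Topology

/-!
Partition `X` into finitely many measurable pieces `E i` of diameter `< r` and move the mass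
`μ (E i)` to a point `p i ∈ E i` at which `f` is within `ε` of its infimum over `E i`. Then
`f (p i) ≤ f + ε` on `E i`, so the integral of `f` increases by at most `ε`, while the integral of
any `φ` whose oscillation at scale `r` is at most `δ` moves by at most `δ`. Letting `r, ε → 0` and
using the uniform continuity of bounded continuous functions on the compact space `X` gives weak
convergence together with the `limsup` bound.
-/

lemma ENNReal.exists_mem_forall_le_add {α : Type*} (f : α → ℝ≥0∞) {s : Set α} (hs : s.Nonempty)
    {ε : ℝ≥0∞} (hε : ε ≠ 0) : ∃ x ∈ s, ∀ y ∈ s, f x ≤ f y + ε := by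
  by_cases htop : ⨅ y ∈ s, f y = ⊤
  · obtain ⟨x, hx⟩ := hs
    exact ⟨x, hx, fun y hy => by simp [(iInf₂_eq_top.1 htop) y hy]⟩
  · obtain ⟨x, hx⟩ := iInf_lt_iff.1 (ENNReal.lt_add_right htop hε)
    obtain ⟨hxs, hfx⟩ := iInf_lt_iff.1 hx
    exact ⟨x, hxs, fun y hy => hfx.le.trans (add_le_add_left (biInf_le f hy) ε)⟩

theorem exists_measurable_fin_partition_of_totallyBounded {X : Type*} [PseudoMetricSpace X]
    [MeasurableSpace X] [OpensMeasurableSpace X] (hX : TotallyBounded (univ : Set X))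
    {r : ℝ} (hr : 0 < r) :
    ∃ (k : ℕ) (E : Fin k → Set X), (∀ i, MeasurableSet (E i)) ∧ Pairwise (Disjoint on E) ∧
      ⋃ i, E i = univ ∧ ∀ i, ∀ x ∈ E i, ∀ y ∈ E i, dist x y < r := by
  obtain ⟨t, htfin, htcover⟩ := Metric.totallyBounded_iff.1 hX (r / 2) (half_pos hr)
  obtain ⟨k, c, -, rfl⟩ := htfin.fin_param
  set B : Fin k → Set X := fun i => Metric.ball (c i) (r / 2)
  refine ⟨k, disjointed B, fun i => disjointedRec (fun _ j ht => ht.diff measurableSet_ball)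
    measurableSet_ball, disjoint_disjointed B, ?_, fun i x hx y hy => ?_⟩
  · simpa [iUnion_disjointed, B, univ_subset_iff] using htcover
  · calc dist x y ≤ dist x (c i) + dist (c i) y := dist_triangle _ _ _
      _ < r / 2 + r / 2 := add_lt_add (disjointed_subset B i hx)
          (Metric.mem_ball'.1 (disjointed_subset B i hy))
      _ = r := add_halves r

section Partition

variable {X ι : Type*} [MeasurableSpace X] [MeasurableSingletonClass X] [Fintype ι]
  {μ : Measure X} {E : ι → Set X}

lemma lintegral_sum_smul_dirac_le (hEm : ∀ i, MeasurableSet (E i))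
    (hEd : Pairwise (Disjoint on E)) (f : X → ℝ≥0∞) (p : ι → X) {ε : ℝ≥0∞}
    (hp : ∀ i, ∀ x ∈ E i, f (p i) ≤ f x + ε) :
    ∫⁻ x, f x ∂(∑ i, μ (E i) • Measure.dirac (p i)) ≤ ∫⁻ x, f x ∂μ + ε * μ univ := by
  have hpiece : ∀ i, μ (E i) * f (p i) ≤ ∫⁻ x in E i, f x ∂μ + ε * μ (E i) := fun i =>
    calc μ (E i) * f (p i) = ∫⁻ _ in E i, f (p i) ∂μ := by rw [setLIntegral_const, mul_comm]
      _ ≤ ∫⁻ x in E i, (f x + ε) ∂μ := setLIntegral_mono' (hEm i) (hp i)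
      _ = ∫⁻ x in E i, f x ∂μ + ε * μ (E i) := by
        rw [lintegral_add_right _ measurable_const, setLIntegral_const]
  calc ∫⁻ x, f x ∂(∑ i, μ (E i) • Measure.dirac (p i)) = ∑ i, μ (E i) * f (p i) := by
        simp only [lintegral_finsetSum_measure, lintegral_smul_measure, lintegral_dirac,
          smul_eq_mul]
    _ ≤ ∑ i, (∫⁻ x in E i, f x ∂μ + ε * μ (E i)) := Finset.sum_le_sum fun i _ => hpiece i
    _ = ∫⁻ x in ⋃ i, E i, f x ∂μ + ε * μ (⋃ i, E i) := by
        rw [Finset.sum_add_distrib, ← Finset.mul_sum, lintegral_iUnion hEm hEd,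
          measure_iUnion hEd hEm, tsum_fintype, tsum_fintype]
    _ ≤ ∫⁻ x, f x ∂μ + ε * μ univ := by
        gcongr
        · exact Measure.restrict_le_self
        · exact subset_univ _

lemma abs_integral_sum_smul_dirac_sub_le [TopologicalSpace X] [OpensMeasurableSpace X]
    [IsFiniteMeasure μ] (hEm : ∀ i, MeasurableSet (E i)) (hEd : Pairwise (Disjoint on E))
    (hEu : ⋃ i, E i = univ) (φ : X →ᵇ ℝ) (p : ι → X) {δ : ℝ}
    (hp : ∀ i, ∀ x ∈ E i, |φ (p i) - φ x| ≤ δ) :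
    |∫ x, φ x ∂(∑ i, μ (E i) • Measure.dirac (p i)) - ∫ x, φ x ∂μ| ≤ δ * μ.real univ := by
  have hpiece : ∀ i, |μ.real (E i) * φ (p i) - ∫ x in E i, φ x ∂μ| ≤ δ * μ.real (E i) := by
    intro i
    rw [← smul_eq_mul, ← setIntegral_const, ← integral_sub (integrable_const _).integrableOn
      (φ.integrable μ).integrableOn]
    exact norm_setIntegral_le_of_norm_le_const (measure_lt_top _ _) fun x hx =>
      (Real.norm_eq_abs _).trans_le (hp i x hx)
  calc |∫ x, φ x ∂(∑ i, μ (E i) • Measure.dirac (p i)) - ∫ x, φ x ∂μ|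
      = |∑ i, (μ.real (E i) * φ (p i) - ∫ x in E i, φ x ∂μ)| := by
        rw [integral_finsetSum_measure fun i _ =>
          (φ.integrable _).smul_measure (measure_ne_top _ _), ← setIntegral_univ, ← hEu,
          integral_iUnion_fintype hEm hEd fun i => (φ.integrable μ).integrableOn,
          Finset.sum_sub_distrib]
        simp only [integral_smul_measure, integral_dirac, smul_eq_mul, measureReal_def]
    _ ≤ ∑ i, δ * μ.real (E i) := (Finset.abs_sum_le_sum_abs _ _).trans
        (Finset.sum_le_sum fun i _ => hpiece i)
    _ = δ * μ.real univ := by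
        rw [← Finset.mul_sum, ← measureReal_iUnion_fintype hEd hEm, hEu]

end Partition

theorem exists_sum_dirac_approx {X : Type*} [MetricSpace X] [MeasurableSpace X] [BorelSpace X]
    (hX : TotallyBounded (univ : Set X)) (f : X → ℝ≥0∞) (μ : Measure X) [IsProbabilityMeasure μ]
    {r : ℝ} (hr : 0 < r) {ε : ℝ≥0∞} (hε : ε ≠ 0) :
    ∃ (k : ℕ) (w : Fin k → ℝ≥0∞) (p : Fin k → X), ∑ i, w i = 1 ∧
      (∀ (φ : X →ᵇ ℝ) (δ : ℝ), (∀ x y, dist x y < r → |φ x - φ y| ≤ δ) →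
        |∫ x, φ x ∂(∑ i, w i • Measure.dirac (p i)) - ∫ x, φ x ∂μ| ≤ δ) ∧
      ∫⁻ x, f x ∂(∑ i, w i • Measure.dirac (p i)) ≤ ∫⁻ x, f x ∂μ + ε := by
  obtain ⟨k, E, hEm, hEd, hEu, hEr⟩ := exists_measurable_fin_partition_of_totallyBounded hX hr
  have : Nonempty X := nonempty_of_isProbabilityMeasure μ
  have hp : ∀ i, ∃ p, ∀ x ∈ E i, dist p x < r ∧ f p ≤ f x + ε := by
    intro i
    rcases (E i).eq_empty_or_nonempty with hE | hE
    · exact ⟨Classical.arbitrary X, by simp [hE]⟩ -- an empty piece carries no mass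
    · obtain ⟨p, hpE, hpf⟩ := ENNReal.exists_mem_forall_le_add f hE hε
      exact ⟨p, fun x hx => ⟨hEr i p hpE x hx, hpf x hx⟩⟩
  choose p hp using hp
  refine ⟨k, fun i => μ (E i), p, ?_, fun φ δ hφ => ?_, ?_⟩
  · rw [← measure_univ (μ := μ), ← hEu, measure_iUnion hEd hEm, tsum_fintype]
  · simpa using abs_integral_sum_smul_dirac_sub_le (μ := μ) hEm hEd hEu φ p
      fun i x hx => hφ _ _ (hp i x hx).1
  · simpa using lintegral_sum_smul_dirac_le (μ := μ) hEm hEd f p fun i x hx => (hp i x hx).2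

theorem stmt13_general {X : Type*} [MetricSpace X] [CompactSpace X] [MeasurableSpace X] [BorelSpace X]
    (f : X → ℝ≥0∞) (μ : Measure X) [IsProbabilityMeasure μ] :
    ∃ μs : ℕ → Measure X,
      (∀ n, ∃ (k : ℕ) (w : Fin k → ℝ≥0∞) (pts : Fin k → X),
        (∑ i, w i) = 1 ∧ μs n = ∑ i, w i • Measure.dirac (pts i)) ∧
      (∀ φ : X →ᵇ ℝ, Tendsto (fun n => ∫ x, φ x ∂(μs n)) atTop (𝓝 (∫ x, φ x ∂μ))) ∧
      limsup (fun n => ∫⁻ x, f x ∂(μs n)) atTop ≤ ∫⁻ x, f x ∂μ := by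
  choose k w p hw hweak hlint using fun n : ℕ =>
    exists_sum_dirac_approx isCompact_univ.totallyBounded f μ (r := 1 / ((n : ℝ) + 1))
      Nat.one_div_pos_of_nat (ENNReal.inv_ne_zero.2 (ENNReal.natCast_ne_top n))
  refine ⟨fun n => ∑ i, w n i • Measure.dirac (p n i), fun n => ⟨k n, w n, p n, hw n, rfl⟩,
    fun φ => ?_, ?_⟩
  · refine Metric.tendsto_atTop.2 fun η hη => ?_
    obtain ⟨δ, hδ, hφ⟩ := Metric.uniformContinuous_iff.1
      (CompactSpace.uniformContinuous_of_continuous φ.continuous) (η / 2) (half_pos hη)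
    obtain ⟨N, hN⟩ := exists_nat_one_div_lt hδ
    refine ⟨N, fun n hn => (hweak n φ (η / 2) fun x y hxy => (hφ ?_).le).trans_lt (half_lt_self hη)⟩
    exact hxy.trans_le (Nat.one_div_le_one_div hn) |>.trans hN
  · have hlim : Tendsto (fun n : ℕ => ∫⁻ x, f x ∂μ + (n : ℝ≥0∞)⁻¹) atTop (𝓝 (∫⁻ x, f x ∂μ)) := by
      simpa using ENNReal.tendsto_inv_nat_nhds_zero.const_add (∫⁻ x, f x ∂μ)
    exact (limsup_le_limsup (.of_forall hlint)).trans hlim.limsup_eq.le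

/-- Finite convex combinations of Dirac masses are `F`-dense in `P(X)` for the linear
functional `F(μ) = ∫ f dμ` with `f : X → [0,∞]` lower semicontinuous and `X` a compact
metric space: every probability measure `μ` is the weak limit of finite convex
combinations `μ n` of Dirac masses with `limsup_n ∫ f dμ_n ≤ ∫ f dμ`. -/
theorem stmt13 {X : Type*} [MetricSpace X] [CompactSpace X] [MeasurableSpace X] [BorelSpace X]
    (f : X → ℝ≥0∞) (hf : LowerSemicontinuous f)
    (μ : Measure X) [IsProbabilityMeasure μ] :
    ∃ μs : ℕ → Measure X,
      (∀ n, ∃ (k : ℕ) (w : Fin k → ℝ≥0∞) (pts : Fin k → X),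
        (∑ i, w i) = 1 ∧ μs n = ∑ i, w i • Measure.dirac (pts i)) ∧
      (∀ φ : X →ᵇ ℝ, Tendsto (fun n => ∫ x, φ x ∂(μs n)) atTop (𝓝 (∫ x, φ x ∂μ))) ∧
      limsup (fun n => ∫⁻ x, f x ∂(μs n)) atTop ≤ ∫⁻ x, f x ∂μ :=
  stmt13_general f μ
end

section
/- Let f : ℝ^d → ℝ be continuous and bounded, U as above (continuous, nonnegative, vanishing only at x̄, growing at infinity), and μ_β(dx) = C_β^{-1} e^{-2βU(x)}dx. Then lim_{β→∞} ∫ f dμ_β = f(x̄). -/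
/-!
Split `e^{-tU} = e^{-(t-t₀)U} e^{-t₀U}`. On a set where `U ≥ c` the Gibbs weight is at most
`e^{-(t-t₀)c}` times a constant, while on the open set `{U < c'}`, which has positive Lebesgue
measure for every `c' > 0` because `U(x̄) = 0`, it is at least `e^{-(t-t₀)c'}` times a positive
constant. Off any neighbourhood of `x̄`, `U` is bounded below by some `c > 0` (compactness near
`x̄`, the growth hypothesis far away), so the normalised weights lose all their mass outside every
neighbourhood of `x̄`; averages of a bounded function continuous at `x̄` then converge to its
value there.
-/

open Real Filter MeasureTheory Set
open scoped Topology

section ExponentialTilting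

variable {α : Type*} [MeasurableSpace α] {μ : Measure α} {U : α → ℝ} {t₀ t : ℝ}

theorem integrable_exp_neg_mul_of_le (hU : Measurable U) (hU0 : ∀ x, 0 ≤ U x)
    (h₀ : Integrable (fun x => exp (-(t₀ * U x))) μ) (ht : t₀ ≤ t) :
    Integrable (fun x => exp (-(t * U x))) μ := by
  refine h₀.mono' (by fun_prop) (Eventually.of_forall fun x => ?_)
  rw [norm_of_nonneg (exp_pos _).le]
  exact exp_le_exp.2 (by nlinarith [hU0 x])

theorem setIntegral_exp_neg_mul_le {A : Set α} {c : ℝ} (hA : MeasurableSet A)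
    (hU : Measurable U) (hU0 : ∀ x, 0 ≤ U x) (h₀ : Integrable (fun x => exp (-(t₀ * U x))) μ)
    (ht : t₀ ≤ t) (hUA : ∀ x ∈ A, c ≤ U x) :
    ∫ x in A, exp (-(t * U x)) ∂μ ≤ exp (-((t - t₀) * c)) * ∫ x in A, exp (-(t₀ * U x)) ∂μ := by
  rw [← integral_const_mul]
  refine setIntegral_mono_on (integrable_exp_neg_mul_of_le hU hU0 h₀ ht).integrableOn
    (h₀.const_mul _).integrableOn hA fun x hx => ?_
  rw [← exp_add]
  exact exp_le_exp.2 (by nlinarith [hUA x hx])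

theorem exp_neg_mul_mul_setIntegral_le_integral {S : Set α} {c : ℝ} (hS : MeasurableSet S)
    (hU : Measurable U) (hU0 : ∀ x, 0 ≤ U x) (h₀ : Integrable (fun x => exp (-(t₀ * U x))) μ)
    (ht : t₀ ≤ t) (hUS : ∀ x ∈ S, U x ≤ c) :
    exp (-((t - t₀) * c)) * ∫ x in S, exp (-(t₀ * U x)) ∂μ ≤ ∫ x, exp (-(t * U x)) ∂μ := by
  have hint := integrable_exp_neg_mul_of_le hU hU0 h₀ ht
  calc exp (-((t - t₀) * c)) * ∫ x in S, exp (-(t₀ * U x)) ∂μ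
      ≤ ∫ x in S, exp (-(t * U x)) ∂μ := by
        rw [← integral_const_mul]
        refine setIntegral_mono_on (h₀.const_mul _).integrableOn hint.integrableOn hS
          fun x hx => ?_
        rw [← exp_add]
        exact exp_le_exp.2 (by nlinarith [hUS x hx])
    _ ≤ ∫ x, exp (-(t * U x)) ∂μ :=
        setIntegral_le_integral hint (Eventually.of_forall fun x => (exp_pos _).le)

theorem tendsto_setIntegral_exp_neg_mul_div_integral {A S : Set α} {c c' : ℝ}
    (hA : MeasurableSet A) (hS : MeasurableSet S) (hSpos : 0 < μ S) (hcc' : c' < c)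
    (hU : Measurable U) (hU0 : ∀ x, 0 ≤ U x) (h₀ : Integrable (fun x => exp (-(t₀ * U x))) μ)
    (hUA : ∀ x ∈ A, c ≤ U x) (hUS : ∀ x ∈ S, U x ≤ c') :
    Tendsto (fun t => (∫ x in A, exp (-(t * U x)) ∂μ) / ∫ x, exp (-(t * U x)) ∂μ)
      atTop (𝓝 0) := by
  set K := ∫ x in A, exp (-(t₀ * U x)) ∂μ
  set L := ∫ x in S, exp (-(t₀ * U x)) ∂μ
  have hL : 0 < L := by
    rw [setIntegral_pos_iff_support_of_nonneg_ae
      (Eventually.of_forall fun x => (exp_pos _).le) h₀.integrableOn]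
    simpa [Function.support, exp_ne_zero] using hSpos
  have hbound : ∀ᶠ t in atTop, (∫ x in A, exp (-(t * U x)) ∂μ) / ∫ x, exp (-(t * U x)) ∂μ
      ≤ K / L * exp (-((t - t₀) * (c - c'))) := by
    filter_upwards [eventually_ge_atTop t₀] with t ht
    calc (∫ x in A, exp (-(t * U x)) ∂μ) / ∫ x, exp (-(t * U x)) ∂μ
        ≤ (exp (-((t - t₀) * c)) * K) / (exp (-((t - t₀) * c')) * L) :=
          div_le_div₀ (by positivity) (setIntegral_exp_neg_mul_le hA hU hU0 h₀ ht hUA)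
            (by positivity) (exp_neg_mul_mul_setIntegral_le_integral hS hU hU0 h₀ ht hUS)
      _ = K / L * exp (-((t - t₀) * (c - c'))) := by
          rw [mul_div_mul_comm, ← exp_sub, mul_comm]; ring_nf
  have hdecay : Tendsto (fun t => K / L * exp (-((t - t₀) * (c - c')))) atTop (𝓝 0) := by
    simpa [sub_eq_add_neg] using (tendsto_exp_neg_atTop_nhds_zero.comp
      ((tendsto_atTop_add_const_right _ (-t₀) tendsto_id).atTop_mul_const
        (sub_pos.2 hcc'))).const_mul (K / L)
  refine tendsto_of_tendsto_of_tendsto_of_le_of_le' tendsto_const_nhds hdecay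
    (Eventually.of_forall fun t => ?_) hbound
  exact div_nonneg (setIntegral_nonneg hA fun x _ => (exp_pos _).le)
    (integral_nonneg fun x => (exp_pos _).le)

end ExponentialTilting

theorem tendsto_setIntegral_exp_neg_mul_div_integral_of_continuous {X : Type*}
    [TopologicalSpace X] [MeasurableSpace X] [OpensMeasurableSpace X] {μ : Measure X}
    [μ.IsOpenPosMeasure] {U : X → ℝ} {A : Set X} {c t₀ : ℝ} (hUc : Continuous U)
    (hU0 : ∀ x, 0 ≤ U x) (h₀ : Integrable (fun x => exp (-(t₀ * U x))) μ)
    (hA : MeasurableSet A) (hlt : ∃ x, U x < c) (hUA : ∀ x ∈ A, c ≤ U x) :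
    Tendsto (fun t => (∫ x in A, exp (-(t * U x)) ∂μ) / ∫ x, exp (-(t * U x)) ∂μ)
      atTop (𝓝 0) := by
  obtain ⟨x₁, hx₁⟩ := hlt
  obtain ⟨c', hx₁c', hc'⟩ := exists_between hx₁
  have hS : IsOpen (U ⁻¹' Iio c') := isOpen_Iio.preimage hUc
  exact tendsto_setIntegral_exp_neg_mul_div_integral hA hS.measurableSet
    (hS.measure_pos μ ⟨x₁, hx₁c'⟩) hc' hUc.measurable hU0 h₀ hUA fun x hx => le_of_lt hx

section DiracLimit

variable {α : Type*} [MeasurableSpace α] {μ : Measure α}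

theorem abs_integral_mul_div_integral_sub_le {w f : α → ℝ} {s : Set α} {a ε K : ℝ}
    (hs : MeasurableSet s) (hw0 : ∀ x, 0 ≤ w x) (hw : Integrable w μ)
    (hpos : 0 < ∫ x, w x ∂μ) (hf : AEStronglyMeasurable f μ) (hε : 0 ≤ ε)
    (hfK : ∀ x, |f x - a| ≤ K) (hfs : ∀ x ∈ s, |f x - a| ≤ ε) :
    |(∫ x, f x * w x ∂μ) / (∫ x, w x ∂μ) - a|
      ≤ ε + K * ((∫ x in sᶜ, w x ∂μ) / ∫ x, w x ∂μ) := by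
  have hfa : AEStronglyMeasurable (fun x => f x - a) μ := hf.sub aestronglyMeasurable_const
  have hdev : Integrable (fun x => (f x - a) * w x) μ :=
    hw.bdd_mul hfa (Eventually.of_forall fun x => hfK x)
  have hdev_abs : Integrable (fun x => |f x - a| * w x) μ :=
    hw.bdd_mul hfa.norm (Eventually.of_forall fun x => by simpa using hfK x)
  have hfw : Integrable (fun x => f x * w x) μ :=
    (hdev.add (hw.const_mul a)).congr (Eventually.of_forall fun x => by
      simp only [Pi.add_apply]; ring)
  have key : |(∫ x, f x * w x ∂μ) - a * ∫ x, w x ∂μ|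
      ≤ ε * ∫ x, w x ∂μ + K * ∫ x in sᶜ, w x ∂μ :=
    calc |(∫ x, f x * w x ∂μ) - a * ∫ x, w x ∂μ| = |∫ x, (f x - a) * w x ∂μ| := by
          rw [← integral_const_mul, ← integral_sub hfw (hw.const_mul a)]
          simp only [sub_mul]
      _ ≤ ∫ x, |f x - a| * w x ∂μ := by
          simpa only [abs_mul, abs_of_nonneg (hw0 _)] using
            abs_integral_le_integral_abs (f := fun x => (f x - a) * w x) (μ := μ)
      _ = (∫ x in s, |f x - a| * w x ∂μ) + ∫ x in sᶜ, |f x - a| * w x ∂μ :=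
          (integral_add_compl hs hdev_abs).symm
      _ ≤ (∫ x in s, ε * w x ∂μ) + ∫ x in sᶜ, K * w x ∂μ := by
          refine add_le_add ?_ ?_
          · exact setIntegral_mono_on hdev_abs.integrableOn (hw.const_mul ε).integrableOn hs
              fun x hx => mul_le_mul_of_nonneg_right (hfs x hx) (hw0 x)
          · exact setIntegral_mono_on hdev_abs.integrableOn (hw.const_mul K).integrableOn
              hs.compl fun x _ => mul_le_mul_of_nonneg_right (hfK x) (hw0 x)
      _ ≤ ε * (∫ x, w x ∂μ) + K * ∫ x in sᶜ, w x ∂μ := by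
          rw [integral_const_mul, integral_const_mul]
          exact add_le_add_left (mul_le_mul_of_nonneg_left
            (setIntegral_le_integral hw (Eventually.of_forall hw0)) hε) _
  have hsplit : (∫ x, f x * w x ∂μ) / (∫ x, w x ∂μ) - a
      = ((∫ x, f x * w x ∂μ) - a * ∫ x, w x ∂μ) / ∫ x, w x ∂μ := by
    field_simp
  rw [hsplit, abs_div, abs_of_pos hpos, div_le_iff₀ hpos]
  calc _ ≤ ε * ∫ x, w x ∂μ + K * ∫ x in sᶜ, w x ∂μ := key
    _ = (ε + K * ((∫ x in sᶜ, w x ∂μ) / ∫ x, w x ∂μ)) * ∫ x, w x ∂μ := by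
      field_simp

theorem tendsto_integral_mul_div_integral_of_concentrates [TopologicalSpace α]
    [OpensMeasurableSpace α] {ι : Type*} {l : Filter ι} {w : ι → α → ℝ} {f : α → ℝ} {x₀ : α}
    (hw0 : ∀ i x, 0 ≤ w i x) (hw : ∀ᶠ i in l, Integrable (w i) μ)
    (hpos : ∀ᶠ i in l, 0 < ∫ x, w i x ∂μ)
    (hconc : ∀ s, IsOpen s → x₀ ∈ s →
      Tendsto (fun i => (∫ x in sᶜ, w i x ∂μ) / ∫ x, w i x ∂μ) l (𝓝 0))
    (hfc : ContinuousAt f x₀) (hf : AEStronglyMeasurable f μ) (hfb : ∃ M, ∀ x, |f x| ≤ M) :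
    Tendsto (fun i => (∫ x, f x * w i x ∂μ) / ∫ x, w i x ∂μ) l (𝓝 (f x₀)) := by
  obtain ⟨M, hM⟩ := hfb
  rw [Metric.tendsto_nhds]
  intro ε hε
  obtain ⟨s, hfs, hs, hx₀s⟩ :=
    eventually_nhds_iff.1 (Metric.tendsto_nhds.1 hfc (ε / 2) (half_pos hε))
  have hsmall : ∀ᶠ i in l,
      ε / 2 + 2 * M * ((∫ x in sᶜ, w i x ∂μ) / ∫ x, w i x ∂μ) < ε := by
    refine (tendsto_const_nhds.add ((hconc s hs hx₀s).const_mul (2 * M))).eventually_lt_const ?_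
    simpa using half_lt_self hε
  filter_upwards [hw, hpos, hsmall] with i hwi hposi hi
  rw [Real.dist_eq]
  refine lt_of_le_of_lt (abs_integral_mul_div_integral_sub_le hs.measurableSet (hw0 i) hwi hposi
    hf (half_pos hε).le (fun x => ?_) fun x hx => ?_) hi
  · calc |f x - f x₀| ≤ |f x| + |f x₀| := abs_sub _ _
      _ ≤ 2 * M := by linarith [hM x, hM x₀]
  · simpa [Real.dist_eq] using (hfs x hx).le

end DiracLimit

theorem IsClosed.exists_pos_forall_le {X : Type*} [TopologicalSpace X] {U : X → ℝ}
    {F K : Set X} {c : ℝ} (hF : IsClosed F) (hUc : Continuous U) (hK : IsCompact K)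
    (hc : 0 < c) (hUK : ∀ x ∉ K, c ≤ U x) (hUF : ∀ x ∈ F, 0 < U x) :
    ∃ c' > 0, ∀ x ∈ F, c' ≤ U x := by
  obtain ⟨b, hb, hbU⟩ :=
    (hK.inter_left hF).exists_forall_le' hUc.continuousOn fun x hx => hUF x hx.1
  refine ⟨min c b, lt_min hc hb, fun x hx => ?_⟩
  by_cases hxK : x ∈ K
  · exact (min_le_right _ _).trans (hbU x ⟨hx, hxK⟩)
  · exact (min_le_left _ _).trans (hUK x hxK)

/-- First-order Laplace asymptotics: if `U ≥ 0` is continuous, vanishes exactly at `x̄`,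
stays bounded away from `0` at infinity and `e^{-2β₀U}` is integrable for some `β₀ > 0`,
then for every bounded continuous `f`,
`∫ f dμ_β = (∫ f e^{-2βU} dx)/(∫ e^{-2βU} dx) → f(x̄)` as `β → ∞`. -/
theorem stmt17 {d : ℕ} (xbar : EuclideanSpace ℝ (Fin d))
    (U : EuclideanSpace ℝ (Fin d) → ℝ) (hUc : Continuous U) (hU0 : ∀ x, 0 ≤ U x)
    (hzero : ∀ x, U x = 0 ↔ x = xbar)
    (hinfty : ∃ c > (0 : ℝ), ∃ R : ℝ, ∀ x, R ≤ ‖x‖ → c ≤ U x)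
    (hint : ∃ β₀ > (0 : ℝ), Integrable (fun x => exp (-(2 * β₀ * U x))) volume)
    (f : EuclideanSpace ℝ (Fin d) → ℝ) (hfc : Continuous f) (hfb : ∃ M : ℝ, ∀ x, |f x| ≤ M) :
    Tendsto (fun b : ℝ =>
        (∫ x, f x * exp (-(2 * b * U x))) / ∫ x, exp (-(2 * b * U x)))
      atTop (𝓝 (f xbar)) := by
  obtain ⟨c, hc, R, hR⟩ := hinfty
  obtain ⟨β₀, -, h₀⟩ := hint
  have h2b : Tendsto (fun b : ℝ => 2 * b) atTop atTop := tendsto_id.const_mul_atTop two_pos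
  have hw : ∀ᶠ b : ℝ in atTop, Integrable (fun x => exp (-(2 * b * U x))) volume := by
    filter_upwards [h2b.eventually_ge_atTop (2 * β₀)] with b hb
    exact integrable_exp_neg_mul_of_le hUc.measurable hU0 h₀ hb
  refine tendsto_integral_mul_div_integral_of_concentrates (fun _ _ => (exp_pos _).le) hw
    (hw.mono fun b hb => integral_exp_pos hb) (fun s hs hxs => ?_) hfc.continuousAt
    hfc.aestronglyMeasurable hfb
  obtain ⟨c', hc', hc'U⟩ := hs.isClosed_compl.exists_pos_forall_le hUc (isCompact_closedBall 0 R)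
    hc (fun x hx => hR x (by simpa using hx : R < ‖x‖).le)
    fun x hx => (hU0 x).lt_of_ne' fun h => hx ((hzero x).1 h ▸ hxs)
  exact (tendsto_setIntegral_exp_neg_mul_div_integral_of_continuous hUc hU0 h₀
    hs.isClosed_compl.measurableSet ⟨xbar, ((hzero xbar).2 rfl).trans_lt hc'⟩ hc'U).comp h2b
end
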